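/- arXiv:math/0510079 — 7 statements merged into one kernel-verified Lean document; each statement's English description precedes it below -/
import Mathlib

section
/- A lattice path P is invalid if and only if there exists an integer ℓ > 0 such that P and the translated path Q = P + ℓ·(r,s) share a common point which P enters with an N-step and Q enters with an E-step. -/
/-- The vector of a step: `true` is an east step `E=(1,0)`, `false` is a north step `N=(0,1)`. -/
def stepVec (b : Bool) : ℤ × ℤ := if b then (1, 0) else (0, 1)

/-- The point of the lattice path reached after the first `i` steps, starting at `start`. -/
def pathPoint (start : ℤ × ℤ) (steps : List Bool) (i : ℕ) : ℤ × ℤ :=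
  start + ((steps.take i).map stepVec).sum

/-- The path with step list `steps` starting at `start` ends at `fin`. -/
def IsPathFrom (start fin : ℤ × ℤ) (steps : List Bool) : Prop :=
  pathPoint start steps steps.length = fin

/-- Validity of a lattice path with respect to the equivalence `v ~ v + ℓ(r,s)`:
whenever the path enters a point `v` with an `E`-step, every later point of the path
in the class of `v` is also entered with an `E`-step. -/
def Valid (r s : ℤ) (start : ℤ × ℤ) (steps : List Bool) : Prop :=
  ∀ i j, i < j → ∀ (hi : i < steps.length) (hj : j < steps.length),
    (∃ ℓ : ℤ, pathPoint start steps (j + 1) - pathPoint start steps (i + 1) = (ℓ * r, ℓ * s)) →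
    steps.get ⟨i, hi⟩ = true → steps.get ⟨j, hj⟩ = true


lemma sum_coords (l : List Bool) :
    ((l.map stepVec).sum).1 + ((l.map stepVec).sum).2 = l.length := by
  induction l with
  | nil => simp
  | cons b t ih =>
    cases b <;> simp [stepVec, Prod.fst_add, Prod.snd_add] <;> push_cast <;> linarith

lemma pathPoint_coords (start : ℤ × ℤ) (steps : List Bool) (k : ℕ) (hk : k ≤ steps.length) :
    (pathPoint start steps k).1 + (pathPoint start steps k).2 = start.1 + start.2 + k := by
  have := sum_coords (steps.take k)
  rw [List.length_take, min_eq_left hk] at this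
  simp only [pathPoint, Prod.fst_add, Prod.snd_add]
  linarith

lemma pathPoint_shift (start v : ℤ × ℤ) (steps : List Bool) (k : ℕ) :
    pathPoint (start + v) steps k = pathPoint start steps k + v := by
  simp [pathPoint, add_right_comm]

/-- `P` is invalid iff for some `ℓ > 0` the paths `P` and `Q = P + ℓ(r,s)` share a
common point which `P` enters with an `N`-step and `Q` enters with an `E`-step. -/
theorem invalid_iff_translate_conflict (r s : ℤ) (hr : 0 < r) (hs : 0 < s)
    (start : ℤ × ℤ) (steps : List Bool) :
    ¬ Valid r s start steps ↔
      ∃ ℓ : ℤ, 0 < ℓ ∧ ∃ i j, ∃ (hi : i < steps.length) (hj : j < steps.length),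
        pathPoint start steps (i + 1) =
          pathPoint (start + (ℓ * r, ℓ * s)) steps (j + 1) ∧
        steps.get ⟨i, hi⟩ = false ∧ steps.get ⟨j, hj⟩ = true := by
  constructor
  · intro hV
    unfold Valid at hV
    push_neg at hV
    obtain ⟨i, j, hij, hi, hj, ⟨ℓ, hdiff⟩, hit, hjf⟩ := hV
    have hci := pathPoint_coords start steps (i + 1) (by omega)
    have hcj := pathPoint_coords start steps (j + 1) (by omega)
    have h1 : (pathPoint start steps (j+1)).1 - (pathPoint start steps (i+1)).1 = ℓ * r := by
      rw [← Prod.fst_sub, hdiff]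
    have h2 : (pathPoint start steps (j+1)).2 - (pathPoint start steps (i+1)).2 = ℓ * s := by
      rw [← Prod.snd_sub, hdiff]
    have hsum : ℓ * (r + s) = (j : ℤ) - i := by push_cast at hci hcj ⊢; linarith [mul_add ℓ r s]
    have hℓ : 0 < ℓ := by
      rcases lt_trichotomy ℓ 0 with h | h | h
      · nlinarith [Int.ofNat_lt.mpr hij]
      · subst h; simp at hsum; omega
      · exact h
    refine ⟨ℓ, hℓ, j, i, hj, hi, ?_, ?_, hit⟩
    · rw [pathPoint_shift, ← hdiff]; abel
    · simpa using hjf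
  · rintro ⟨ℓ, hℓ, i, j, hi, hj, heq, hif, hjt⟩ hV
    rw [pathPoint_shift] at heq
    have hci := pathPoint_coords start steps (i + 1) (by omega)
    have hcj := pathPoint_coords start steps (j + 1) (by omega)
    have h1 : (pathPoint start steps (i+1)).1 = (pathPoint start steps (j+1)).1 + ℓ * r := by
      rw [heq, Prod.fst_add]
    have h2 : (pathPoint start steps (i+1)).2 = (pathPoint start steps (j+1)).2 + ℓ * s := by
      rw [heq, Prod.snd_add]
    have hsum : (i : ℤ) - j = ℓ * (r + s) := by push_cast at hci hcj ⊢; linarith [mul_add ℓ r s]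
    have hpos : 0 < ℓ * (r + s) := mul_pos hℓ (by linarith)
    have hji : j < i := by omega
    have := hV j i hji hj hi ⟨ℓ, by rw [heq]; exact Prod.ext (by simp) (by simp)⟩ hjt
    rw [this] at hif
    exact Bool.noConfusion hif
end

section
/- (Switching Lemma) Let P be a lattice path and Q = P + (r,s). For each integer i, let v_i(P) = (x_i(P), y_i(P)) denote the unique point of P on the diagonal line x + y = i (when it exists). If there exist integers i < k such that x_i(P) > x_i(Q) and x_k(P) ≤ x_k(Q), and all the relevant diagonal intersections exist, then P is invalid. -/
/-- The x-coordinate of the (unique) point of the path on the diagonal line `x + y = i`. -/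
def xdiag (start : ℤ × ℤ) (steps : List Bool) (i : ℤ) : ℤ :=
  (pathPoint start steps (i - start.1 - start.2).toNat).1

/-- One step of the path. -/
lemma pathPoint_succ (start : ℤ × ℤ) (steps : List Bool) (n : ℕ) (h : n < steps.length) :
    pathPoint start steps (n+1) = pathPoint start steps n + stepVec (steps.get ⟨n, h⟩) := by
  simp only [pathPoint, List.take_succ, List.getElem?_eq_getElem h, List.get_eq_getElem,
    Option.toList_some, List.map_append, List.map_cons, List.map_nil, List.sum_append,
    List.sum_cons, List.sum_nil, add_zero, add_assoc]

/-- The path is constant after its last step. -/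
lemma pathPoint_stop (start : ℤ × ℤ) (steps : List Bool) (n : ℕ) (h : steps.length ≤ n) :
    pathPoint start steps n = pathPoint start steps steps.length := by
  simp [pathPoint, List.take_of_length_le h, List.take_length]

/-- The coordinate sum along the path. -/
lemma coordSum (start : ℤ × ℤ) (steps : List Bool) (n : ℕ) :
    (pathPoint start steps n).1 + (pathPoint start steps n).2
      = start.1 + start.2 + min n steps.length := by
  induction n with
  | zero => simp [pathPoint]
  | succ n ih =>
    by_cases h : n < steps.length
    · rw [pathPoint_succ start steps n h]
      cases hb : steps.get ⟨n, h⟩ <;>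
        · rw [hb] at *
          simp only [stepVec, Prod.fst_add, Prod.snd_add, if_true, if_false] at *
          push_cast at *
          omega
    · rw [pathPoint_stop start steps (n+1) (by omega),
        ← pathPoint_stop start steps n (by omega)]
      rw [ih]; omega

/-- Translating the starting point translates the path. -/
lemma pathPoint_add (start v : ℤ × ℤ) (steps : List Bool) (n : ℕ) :
    pathPoint (start + v) steps n = pathPoint start steps n + v := by
  simp [pathPoint]; abel

/-- A discrete intermediate value theorem for a sequence that decreases by at most 1. -/
lemma ivtDown (g : ℕ → ℤ) (hstep : ∀ m, g m - 1 ≤ g (m+1)) (a b : ℕ) (hab : a < b)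
    (ha : 1 ≤ g a) (hb : g b ≤ 0) :
    ∃ m, a ≤ m ∧ m < b ∧ 1 ≤ g m ∧ g (m+1) ≤ 0 := by
  by_contra hcon
  push_neg at hcon
  have key : ∀ n, a + n ≤ b → 1 ≤ g (a + n) := by
    intro n
    induction n with
    | zero => intro _; simpa using ha
    | succ n ih =>
      intro h
      have h1 := ih (by omega)
      have h2 := hcon (a + n) (by omega) (by omega) h1
      have := hstep (a + n)
      rw [show a + (n+1) = a + n + 1 by omega]
      omega
  have := key (b - a) (by omega)
  rw [show a + (b - a) = b by omega] at this
  omega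

/-- Switching Lemma: if `Q = P + (r,s)` and there are `i < k` with
`x_i(P) > x_i(Q)` and `x_k(P) ≤ x_k(Q)` (all relevant diagonal intersections existing),
then `P` is invalid. -/
theorem switching_lemma (r s : ℤ) (hr : 0 < r) (hs : 0 < s)
    (start : ℤ × ℤ) (steps : List Bool) (i k : ℤ) (hik : i < k)
    (hQi : start.1 + start.2 + r + s ≤ i)
    (hPk : k ≤ start.1 + start.2 + steps.length)
    (hxi : xdiag start steps i > xdiag (start + (r, s)) steps i)
    (hxk : xdiag start steps k ≤ xdiag (start + (r, s)) steps k) :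
    ¬ Valid r s start steps := by
  intro hV
  set c := start.1 + start.2 with hc
  set x : ℕ → ℤ := fun n => (pathPoint start steps n).1 with hx
  set E : ℕ → ℤ := fun n => x (n+1) - x n with hE
  have hE01 : ∀ n, E n = 0 ∨ E n = 1 := by
    intro n
    by_cases h : n < steps.length
    · have hp := pathPoint_succ start steps n h
      cases hb : steps.get ⟨n, h⟩ <;>
        · simp only [List.get_eq_getElem] at hb
          simp [hE, hx, hp, hb, stepVec, Prod.fst_add]
    · have h1 := pathPoint_stop start steps (n+1) (by omega)
      have h2 := pathPoint_stop start steps n (by omega)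
      simp [hE, hx, h1, h2]
  have hEtrue : ∀ n (h : n < steps.length), E n = if steps.get ⟨n, h⟩ then 1 else 0 := by
    intro n h
    have hp := pathPoint_succ start steps n h
    cases hb : steps.get ⟨n, h⟩ <;>
      · simp only [List.get_eq_getElem] at hb
        simp [hE, hx, hp, hb, stepVec, Prod.fst_add]
  set d : ℕ := (r + s).toNat with hd
  have hdrs : (d : ℤ) = r + s := by omega
  set g : ℕ → ℤ := fun m => x (m + d) - x m - r with hg
  have hgstep : ∀ m, g m - 1 ≤ g (m + 1) := by
    intro m
    have h1 := hE01 m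
    have h2 := hE01 (m + d)
    have e1 : E m = x (m+1) - x m := rfl
    have e2 : E (m+d) = x (m+d+1) - x (m+d) := rfl
    have hg1 : g (m+1) = x (m+1+d) - x (m+1) - r := rfl
    have hg0 : g m = x (m+d) - x m - r := rfl
    rw [show m+1+d = m+d+1 by omega] at hg1
    omega
  have hca : ∀ t : ℤ, t - start.1 - start.2 = t - c := by intro t; rw [hc]; ring
  have hxP : ∀ t : ℤ, xdiag start steps t = x (t - c).toNat := by
    intro t; rw [xdiag, hca]
  have hxQ : ∀ t : ℤ, xdiag (start + (r, s)) steps t = x (t - c - r - s).toNat + r := by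
    intro t
    have hQ1 : (start + (r, s)).1 = start.1 + r := rfl
    have hQ2 : (start + (r, s)).2 = start.2 + s := rfl
    rw [xdiag, hQ1, hQ2, pathPoint_add, Prod.fst_add]
    have h3 : t - (start.1 + r) - (start.2 + s) = t - c - r - s := by rw [hc]; ring
    rw [h3]
  have hga : 1 ≤ g ((i - c - r - s).toNat) := by
    have h1 := hxP i
    have h2 := hxQ i
    rw [h1, h2] at hxi
    rw [show (i - c).toNat = (i - c - r - s).toNat + d by omega] at hxi
    simp only [hg]
    omega
  have hgb : g ((k - c - r - s).toNat) ≤ 0 := by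
    have h1 := hxP k
    have h2 := hxQ k
    rw [h1, h2] at hxk
    rw [show (k - c).toNat = (k - c - r - s).toNat + d by omega] at hxk
    simp only [hg]
    omega
  obtain ⟨m, ham, hmb, hgm, hgm1⟩ :=
    ivtDown g hgstep _ _ (show (i - c - r - s).toNat < (k - c - r - s).toNat by omega) hga hgb
  have hmdlen : m + d < steps.length := by omega
  have hmlen : m < steps.length := by omega
  have e1 : E m = x (m+1) - x m := rfl
  have e2 : E (m+d) = x (m+d+1) - x (m+d) := rfl
  have hg1 : g (m+1) = x (m+1+d) - x (m+1) - r := rfl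
  have hg0 : g m = x (m+d) - x m - r := rfl
  rw [show m+1+d = m+d+1 by omega] at hg1
  have h1 := hE01 m
  have h2 := hE01 (m + d)
  have hEm : E m = 1 := by omega
  have hEmd : E (m+d) = 0 := by omega
  have hxr : x (m+d+1) = x (m+1) + r := by omega
  have hsm : steps.get ⟨m, hmlen⟩ = true := by
    have h := hEtrue m hmlen
    by_contra hb
    simp only [Bool.not_eq_true] at hb
    rw [hb] at h
    simp at h
    omega
  have hsmd : steps.get ⟨m + d, hmdlen⟩ = false := by
    by_contra hb
    simp only [Bool.not_eq_false] at hb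
    have h := hEtrue (m+d) hmdlen
    rw [hb] at h
    simp at h
    omega
  have hsub : ∀ p q : ℤ × ℤ, p - q = (p.1 - q.1, p.2 - q.2) := fun p q => rfl
  have hdiff : pathPoint start steps (m + d + 1) - pathPoint start steps (m + 1)
      = ((1 : ℤ) * r, (1 : ℤ) * s) := by
    have cs1 := coordSum start steps (m + d + 1)
    have cs2 := coordSum start steps (m + 1)
    rw [min_eq_left (by omega)] at cs1
    rw [min_eq_left (by omega)] at cs2
    rw [hsub, Prod.mk.injEq]
    simp only [hx] at hxr
    constructor <;> push_cast at * <;> omega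
  have := hV m (m + d) (by omega) hmlen hmdlen ⟨1, hdiff⟩ hsm
  rw [hsmd] at this
  exact Bool.false_ne_true this
end

section
/- (Three-Points Lemma) Let u, v, w be three points in the same equivalence class modulo (r,s) with v = u + a(r,s) and w = u + b(r,s), where 0 < a < b. If a lattice path P passes strictly west of u, weakly east of v, and weakly west of w, then P is invalid. -/
/-- `P` passes strictly west of `v`: some point of `P` has the same `y`-coordinate as `v`
and strictly smaller `x`-coordinate. -/
def PassesStrictlyWest (start : ℤ × ℤ) (steps : List Bool) (v : ℤ × ℤ) : Prop :=
  ∃ m ≤ steps.length, (pathPoint start steps m).2 = v.2 ∧ (pathPoint start steps m).1 < v.1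

/-- `P` passes weakly west of `v`: some point of `P` has the `y`-coordinate of `v`, and
every such point has `x`-coordinate at most that of `v`. -/
def PassesWeaklyWest (start : ℤ × ℤ) (steps : List Bool) (v : ℤ × ℤ) : Prop :=
  (∃ m ≤ steps.length, (pathPoint start steps m).2 = v.2) ∧
  ∀ m ≤ steps.length, (pathPoint start steps m).2 = v.2 → (pathPoint start steps m).1 ≤ v.1

/-- `P` passes weakly east of `v`: some point of `P` has the `y`-coordinate of `v`, and
every such point has `x`-coordinate at least that of `v`. -/
def PassesWeaklyEast (start : ℤ × ℤ) (steps : List Bool) (v : ℤ × ℤ) : Prop :=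
  (∃ m ≤ steps.length, (pathPoint start steps m).2 = v.2) ∧
  ∀ m ≤ steps.length, (pathPoint start steps m).2 = v.2 → v.1 ≤ (pathPoint start steps m).1

namespace TPL

abbrev px (start : ℤ × ℤ) (steps : List Bool) (m : ℕ) : ℤ := (pathPoint start steps m).1
abbrev py (start : ℤ × ℤ) (steps : List Bool) (m : ℕ) : ℤ := (pathPoint start steps m).2

variable (start : ℤ × ℤ) (steps : List Bool)

lemma pp_succ (m : ℕ) (hm : m < steps.length) :
    pathPoint start steps (m+1) = pathPoint start steps m + stepVec (steps.get ⟨m, hm⟩) := by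
  unfold pathPoint
  simp only [List.take_succ, List.getElem?_eq_getElem hm, Option.toList_some, List.map_append,
    List.map_cons, List.map_nil, List.sum_append, List.sum_cons, List.sum_nil, add_zero,
    List.get_eq_getElem]
  rw [add_assoc]

lemma pp_stop (m : ℕ) (hm : steps.length ≤ m) :
    pathPoint start steps m = pathPoint start steps steps.length := by
  unfold pathPoint
  rw [List.take_of_length_le hm, List.take_length]

lemma step_true (m : ℕ) (hm : m < steps.length) (hb : steps.get ⟨m, hm⟩ = true) :
    px start steps (m+1) = px start steps m + 1 ∧ py start steps (m+1) = py start steps m := by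
  have h := pp_succ start steps m hm
  rw [hb] at h
  constructor <;> simp [px, py, h, stepVec]

lemma step_false (m : ℕ) (hm : m < steps.length) (hb : steps.get ⟨m, hm⟩ = false) :
    px start steps (m+1) = px start steps m ∧ py start steps (m+1) = py start steps m + 1 := by
  have h := pp_succ start steps m hm
  rw [hb] at h
  constructor <;> simp [px, py, h, stepVec]

lemma step_bounds (m : ℕ) :
    px start steps m ≤ px start steps (m+1) ∧ px start steps (m+1) ≤ px start steps m + 1 ∧
    py start steps m ≤ py start steps (m+1) ∧ py start steps (m+1) ≤ py start steps m + 1 := by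
  rcases Nat.lt_or_ge m steps.length with h|h
  · cases hb : steps.get ⟨m, h⟩
    · have := step_false start steps m h hb
      omega
    · have := step_true start steps m h hb
      omega
  · have heq : pathPoint start steps (m+1) = pathPoint start steps m := by
      rw [pp_stop _ _ (m+1) (by omega), pp_stop _ _ m h]
    simp only [px, py, heq]
    omega

lemma px_mono : Monotone (px start steps) :=
  monotone_nat_of_le_succ (fun m => (step_bounds start steps m).1)

lemma py_mono : Monotone (py start steps) :=
  monotone_nat_of_le_succ (fun m => (step_bounds start steps m).2.2.1)

lemma px_succ_le (m : ℕ) : px start steps (m+1) ≤ px start steps m + 1 :=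
  (step_bounds start steps m).2.1

lemma py_succ_le (m : ℕ) : py start steps (m+1) ≤ py start steps m + 1 :=
  (step_bounds start steps m).2.2.2

lemma hit (f : ℕ → ℤ) (hstep : ∀ m, f (m+1) ≤ f m + 1) (c : ℤ) (m' : ℕ)
    (h0 : f 0 < c) (hm' : c ≤ f m') :
    ∃ m : ℕ, m + 1 = sInf {k | c ≤ f k} ∧ m + 1 ≤ m' ∧ f (m+1) = c ∧ f m = c - 1 := by
  have hne : (sInf {k | c ≤ f k}) ∈ {k | c ≤ f k} := Nat.sInf_mem ⟨m', hm'⟩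
  have hle : sInf {k | c ≤ f k} ≤ m' := Nat.sInf_le hm'
  obtain ⟨m, hm⟩ : ∃ m, sInf {k | c ≤ f k} = m + 1 := by
    refine Nat.exists_eq_succ_of_ne_zero ?_
    intro h
    rw [h] at hne
    exact absurd hne (not_le.mpr h0)
  have hnot : m ∉ {k | c ≤ f k} := Nat.notMem_of_lt_sInf (by omega)
  have h1 : f m < c := not_le.mp hnot
  rw [hm] at hne hle
  have hne' : c ≤ f (m+1) := hne
  have h3 := hstep m
  exact ⟨m, hm.symm, hle, by omega, by omega⟩

noncomputable def fIdx (h : ℤ) : ℕ := sInf {m | h ≤ py start steps m}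

noncomputable def fX (h : ℤ) : ℤ := px start steps (fIdx start steps h)

lemma py_fIdx (h : ℤ) (h0 : py start steps 0 ≤ h) (hn : h ≤ py start steps steps.length) :
    py start steps (fIdx start steps h) = h := by
  rcases eq_or_lt_of_le h0 with he|hlt
  · have hz : fIdx start steps h = 0 := Nat.sInf_eq_zero.mpr (Or.inl (le_of_eq he.symm))
    rw [hz, ← he]
  · obtain ⟨m, hm, _, hc, _⟩ := hit (py start steps) (py_succ_le start steps) h steps.length hlt hn
    rw [fIdx, ← hm]
    exact hc

lemma fX_le_px (m : ℕ) (h : ℤ) (hm : py start steps m = h) : fX start steps h ≤ px start steps m :=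
  px_mono start steps (Nat.sInf_le (le_of_eq hm.symm))

lemma fX_mono (h h' : ℤ) (hh : h ≤ h') (hn : h' ≤ py start steps steps.length) :
    fX start steps h ≤ fX start steps h' := by
  have hmem : h' ≤ py start steps (fIdx start steps h') :=
    Nat.sInf_mem (⟨steps.length, hn⟩ : {m | h' ≤ py start steps m}.Nonempty)
  exact px_mono start steps (Nat.sInf_le (le_trans hh hmem))


lemma viol (r s : ℤ) (hr : 0 < r) (hs : 0 < s) (hval : Valid r s start steps)
    (ℓ h1 : ℤ) (hl : 1 ≤ ℓ) (m' : ℕ) (hm'n : m' ≤ steps.length)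
    (hy0 : py start steps 0 ≤ h1) (hym' : py start steps m' = h1)
    (h2n : h1 + ℓ*s ≤ py start steps steps.length)
    (hgt : fX start steps h1 + ℓ*r < fX start steps (h1+ℓ*s))
    (hle : fX start steps (h1+ℓ*s) ≤ px start steps m' + ℓ*r) : False := by
  have hls : 1 ≤ ℓ * s := by nlinarith
  -- east hit: the first index reaching x-coordinate t := fX(h1+ℓs) - ℓr
  have hx0 : px start steps 0 < fX start steps (h1+ℓ*s) - ℓ*r := by
    have h1' : px start steps 0 ≤ fX start steps h1 :=
      px_mono start steps (Nat.zero_le _)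
    linarith
  obtain ⟨i, hiEq, hile, hxi1, hxi⟩ := hit (px start steps) (px_succ_le start steps)
    (fX start steps (h1+ℓ*s) - ℓ*r) m' hx0 (by linarith)
  have hin : i < steps.length := by omega
  have hstepi : steps.get ⟨i, hin⟩ = true := by
    cases hb : steps.get ⟨i, hin⟩
    · have := (step_false start steps i hin hb).1
      omega
    · rfl
  have hfy : py start steps (fIdx start steps h1) = h1 :=
    py_fIdx start steps h1 hy0 (by linarith)
  have hi_gt : fIdx start steps h1 < i + 1 := by
    by_contra hcc
    push_neg at hcc
    have hmx := px_mono start steps hcc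
    rw [hxi1] at hmx
    have hmx' : fX start steps (h1+ℓ*s) - ℓ*r ≤ fX start steps h1 := hmx
    linarith
  have hyi1 : py start steps (i+1) = h1 := by
    have hup : py start steps (i+1) ≤ h1 := hym' ▸ py_mono start steps hile
    have hdn : h1 ≤ py start steps (i+1) := hfy ▸ py_mono start steps hi_gt.le
    omega
  -- north hit: the first index reaching height h1 + ℓ*s
  obtain ⟨j, hjEq, hjle, hyj1, hyj⟩ := hit (py start steps) (py_succ_le start steps)
    (h1 + ℓ*s) steps.length (by linarith) h2n
  have hjn : j < steps.length := by omega
  have hstepj : steps.get ⟨j, hjn⟩ = false := by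
    cases hb : steps.get ⟨j, hjn⟩
    · rfl
    · have := (step_true start steps j hjn hb).2
      omega
  have hxj : px start steps (j+1) = fX start steps (h1 + ℓ*s) := by
    have hE : fIdx start steps (h1+ℓ*s) = j + 1 := hjEq.symm
    rw [fX, hE]
  have hij : i < j := by
    by_contra hcc
    push_neg at hcc
    have := py_mono start steps (show j+1 ≤ i+1 by omega)
    rw [hyj1, hyi1] at this
    linarith
  have hclass : pathPoint start steps (j+1) - pathPoint start steps (i+1) = (ℓ*r, ℓ*s) := by
    rw [Prod.ext_iff]
    constructor
    · show px start steps (j+1) - px start steps (i+1) = ℓ*r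
      rw [hxj, hxi1]
      ring
    · show py start steps (j+1) - py start steps (i+1) = ℓ*s
      rw [hyj1, hyi1]
      ring
  have := hval i j hij hin hjn ⟨ℓ, hclass⟩ hstepi
  rw [hstepj] at this
  exact Bool.false_ne_true this

lemma core (r s : ℤ) (hr : 0 < r) (hs : 0 < s) (hval : Valid r s start steps)
    (ℓ h : ℤ) (hl : 1 ≤ ℓ)
    (hy0 : py start steps 0 ≤ h) (hh1 : h + 1 ≤ py start steps steps.length)
    (hh2 : h + ℓ*s ≤ py start steps steps.length)
    (hW : fX start steps h + ℓ*r < fX start steps (h + ℓ*s)) :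
    fX start steps (h+1) + ℓ*r < fX start steps (h + ℓ*s) := by
  obtain ⟨m, hmEq, hmle, hy1, hy2⟩ := hit (py start steps) (py_succ_le start steps)
    (h+1) steps.length (by linarith) hh1
  have hmn : m < steps.length := by omega
  have hym : py start steps m = h := by omega
  have hstep : steps.get ⟨m, hmn⟩ = false := by
    cases hb : steps.get ⟨m, hmn⟩
    · rfl
    · have := (step_true start steps m hmn hb).2
      omega
  have hxm : px start steps m = fX start steps (h+1) := by
    have hE : fIdx start steps (h+1) = m + 1 := hmEq.symm
    have hpx := (step_false start steps m hmn hstep).1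
    rw [fX, hE, hpx]
  by_contra hcon
  push_neg at hcon
  exact viol start steps r s hr hs hval ℓ h hl m (by omega) hy0 hym hh2 hW
    (by rw [hxm]; linarith)

lemma prop_up (r s : ℤ) (hr : 0 < r) (hs : 0 < s) (hval : Valid r s start steps)
    (ℓ : ℤ) (hl : 1 ≤ ℓ) (h0 : ℤ) (hy0 : py start steps 0 ≤ h0)
    (hW0 : fX start steps h0 + ℓ*r < fX start steps (h0 + ℓ*s)) :
    ∀ k : ℕ, h0 + k + ℓ*s ≤ py start steps steps.length →
      fX start steps (h0 + k) + ℓ*r < fX start steps (h0 + k + ℓ*s) := by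
  have hls : 1 ≤ ℓ * s := by nlinarith
  intro k
  induction k with
  | zero => intro _; simpa using hW0
  | succ k ih =>
    intro hk
    have hcast : (((k:ℕ)+1 : ℕ) : ℤ) = (k:ℤ) + 1 := by push_cast; ring
    rw [hcast] at hk ⊢
    have hk' : h0 + k + ℓ*s ≤ py start steps steps.length := by linarith
    have h1 := ih hk'
    have h2 := core start steps r s hr hs hval ℓ (h0 + k) hl
      (by have : (0:ℤ) ≤ (k:ℤ) := Int.natCast_nonneg k; linarith)
      (by linarith) hk' h1
    have h3 : fX start steps (h0 + k + ℓ*s) ≤ fX start steps (h0 + k + 1 + ℓ*s) :=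
      fX_mono start steps _ _ (by linarith) (by linarith)
    have heq : h0 + ((k:ℤ) + 1) = h0 + k + 1 := by ring
    rw [heq]
    linarith


noncomputable def Phi (start : ℤ × ℤ) (steps : List Bool) (r s u2 h : ℤ) : ℤ :=
  s * fX start steps h - r * (h - u2)

end TPL


open TPL

set_option maxHeartbeats 1000000 in
/-- Three-Points Lemma: if `u < v < w` lie in one equivalence class modulo
`(r,s)` and `P` passes strictly west of `u`, weakly east of `v`, and weakly west of `w`,
then `P` is invalid. -/
theorem three_points_lemma (r s : ℤ) (hr : 0 < r) (hs : 0 < s)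
    (start : ℤ × ℤ) (steps : List Bool) (u v w : ℤ × ℤ) (a b : ℤ)
    (ha : 0 < a) (hab : a < b)
    (hv : v = (u.1 + a * r, u.2 + a * s)) (hw : w = (u.1 + b * r, u.2 + b * s))
    (hu : PassesStrictlyWest start steps u)
    (hve : PassesWeaklyEast start steps v)
    (hww : PassesWeaklyWest start steps w) :
    ¬ Valid r s start steps := by
  intro hval
  obtain ⟨mu, hmun, hmuy, hmux⟩ := hu
  obtain ⟨⟨mv, hmvn, hmvy⟩, hveE⟩ := hve
  obtain ⟨⟨mw, hmwn, hmwy⟩, hwwW⟩ := hww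
  have hv1 : v.1 = u.1 + a*r := by rw [hv]
  have hv2 : v.2 = u.2 + a*s := by rw [hv]
  have hw1 : w.1 = u.1 + b*r := by rw [hw]
  have hw2 : w.2 = u.2 + b*s := by rw [hw]
  have hy0u : py start steps 0 ≤ u.2 := by
    have h := py_mono start steps (Nat.zero_le mu)
    rw [show py start steps mu = u.2 from hmuy] at h
    exact h
  have has1 : (1:ℤ) ≤ a*s := by nlinarith
  have hbas1 : (1:ℤ) ≤ (b-a)*s := by nlinarith
  have hsplit : (b-a)*s + a*s = b*s := by ring
  have hsplitr : (b-a)*r + a*r = b*r := by ring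
  have hwn : u.2 + b*s ≤ py start steps steps.length := by
    have h := py_mono start steps hmwn
    rw [show py start steps mw = w.2 from hmwy] at h
    linarith [hw2.symm.le, hw2.le]
  have hvn : u.2 + a*s ≤ py start steps steps.length := by linarith
  have hfxu : fX start steps u.2 < u.1 := by
    have h := fX_le_px start steps mu u.2 hmuy
    have hmux' : px start steps mu < u.1 := hmux
    linarith
  have hfiv_le : fIdx start steps (u.2+a*s) ≤ steps.length := Nat.sInf_le hvn
  have hpyv : py start steps (fIdx start steps (u.2+a*s)) = u.2 + a*s :=
    py_fIdx start steps _ (by linarith) hvn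
  have hfxv : u.1 + a*r ≤ fX start steps (u.2+a*s) := by
    have h := hveE (fIdx start steps (u.2+a*s)) hfiv_le (by rw [hv2]; exact hpyv)
    rw [hv1] at h
    exact h
  have hfiw_le : fIdx start steps (u.2+b*s) ≤ steps.length := Nat.sInf_le hwn
  have hpyw : py start steps (fIdx start steps (u.2+b*s)) = u.2 + b*s :=
    py_fIdx start steps _ (by linarith) hwn
  have hfxw : fX start steps (u.2+b*s) ≤ u.1 + b*r := by
    have h := hwwW (fIdx start steps (u.2+b*s)) hfiw_le (by rw [hw2]; exact hpyw)
    rw [hw1] at h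
    exact h
  -- the A-chain: strict east drift for the translate by a(r,s)
  have notWa : ∀ h : ℤ, u.2 ≤ h → h + a*s ≤ u.2 + b*s →
      fX start steps h + a*r < fX start steps (h + a*s) := by
    intro h hh1 hh2
    have hW0 : fX start steps u.2 + a*r < fX start steps (u.2 + a*s) := by linarith
    have hk : u.2 + ((h - u.2).toNat : ℤ) = h := by omega
    have hp := prop_up start steps r s hr hs hval a (by omega) u.2 hy0u hW0
      (h - u.2).toNat (by rw [hk]; linarith)
    rw [hk] at hp
    exact hp
  have strongA : ∀ h : ℤ, u.2 ≤ h → h + a*s ≤ u.2 + b*s →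
      fX start steps (h+1) + a*r < fX start steps (h + a*s) := by
    intro h hh1 hh2
    exact core start steps r s hr hs hval a h (by omega) (by linarith) (by linarith)
      (by linarith) (notWa h hh1 hh2)
  -- the B-chain: weak west bound for the translate by (b-a)(r,s)
  have hWb : ∀ h : ℤ, u.2 ≤ h → h ≤ u.2 + a*s →
      fX start steps (h + (b-a)*s) ≤ fX start steps h + (b-a)*r := by
    intro h hh1 hh2
    by_contra hcon
    push_neg at hcon
    have hk : h + ((u.2 + a*s - h).toNat : ℤ) = u.2 + a*s := by omega
    have hp := prop_up start steps r s hr hs hval (b-a) (by omega) h (by linarith) hcon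
      ((u.2 + a*s - h).toNat) (by rw [hk]; linarith)
    rw [hk] at hp
    have he : u.2 + a*s + (b-a)*s = u.2 + b*s := by ring
    rw [he] at hp
    linarith
  -- potential function argument
  have psiA : ∀ h : ℤ, u.2 ≤ h → h ≤ u.2 + (b-a)*s →
      Phi start steps r s u.2 h + s ≤ Phi start steps r s u.2 (h + a*s) := by
    intro h hh1 hh2
    have h1 := strongA h hh1 (by linarith)
    have h2 : fX start steps h ≤ fX start steps (h+1) :=
      fX_mono start steps h (h+1) (by linarith) (by linarith)
    have h3 : fX start steps h + a*r + 1 ≤ fX start steps (h + a*s) := by linarith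
    simp only [Phi]
    nlinarith [mul_le_mul_of_nonneg_left h3 hs.le]
  have psiB : ∀ h : ℤ, u.2 ≤ h → h ≤ u.2 + a*s →
      Phi start steps r s u.2 (h + (b-a)*s) ≤ Phi start steps r s u.2 h := by
    intro h hh1 hh2
    have h1 := hWb h hh1 hh2
    simp only [Phi]
    nlinarith [mul_le_mul_of_nonneg_left h1 hs.le]
  have red : ∀ (k : ℕ) (z : ℤ), u.2 ≤ z → z ≤ u.2 + b*s → z - u.2 ≤ k →
      ∃ z', u.2 ≤ z' ∧ z' ≤ u.2 + (b-a)*s ∧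
        Phi start steps r s u.2 z ≤ Phi start steps r s u.2 z' := by
    intro k
    induction k with
    | zero =>
      intro z h1 h2 h3
      push_cast at h3
      exact ⟨z, h1, by linarith, le_refl _⟩
    | succ k ih =>
      intro z h1 h2 h3
      by_cases hc : z ≤ u.2 + (b-a)*s
      · exact ⟨z, h1, hc, le_refl _⟩
      · push_neg at hc
        have h4 : u.2 ≤ z - (b-a)*s := by linarith
        have h5 : z - (b-a)*s ≤ u.2 + a*s := by linarith
        have h6 := psiB (z - (b-a)*s) h4 h5
        have he : z - (b-a)*s + (b-a)*s = z := by ring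
        rw [he] at h6
        obtain ⟨z', g1, g2, g3⟩ := ih (z - (b-a)*s) h4 (by linarith)
          (by push_cast at h3 ⊢; linarith)
        exact ⟨z', g1, g2, le_trans h6 g3⟩
  have main : ∀ N : ℕ, ∃ z, u.2 ≤ z ∧ z ≤ u.2 + (b-a)*s ∧
      Phi start steps r s u.2 u.2 + N*s ≤ Phi start steps r s u.2 z := by
    intro N
    induction N with
    | zero => exact ⟨u.2, le_refl _, by linarith, by push_cast; linarith⟩
    | succ N ih =>
      obtain ⟨z, h1, h2, h3⟩ := ih
      have h4 := psiA z h1 h2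
      obtain ⟨z', g1, g2, g3⟩ := red (z + a*s - u.2).toNat (z + a*s) (by linarith)
        (by linarith) (Int.self_le_toNat _)
      refine ⟨z', g1, g2, ?_⟩
      push_cast
      linarith
  set NN : ℕ := (s*(u.1 + b*r) - Phi start steps r s u.2 u.2).toNat + 1 with hNN
  obtain ⟨z, hz1, hz2, hz3⟩ := main NN
  have hb1 : fX start steps z ≤ fX start steps (u.2 + b*s) :=
    fX_mono start steps _ _ (by linarith) hwn
  have hb2 : Phi start steps r s u.2 z ≤ s*(u.1 + b*r) := by
    have hx : s * fX start steps z ≤ s * (u.1 + b*r) :=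
      mul_le_mul_of_nonneg_left (by linarith) hs.le
    have hy : 0 ≤ r * (z - u.2) := mul_nonneg hr.le (by linarith)
    simp only [Phi]
    linarith
  have hup : s*(u.1 + b*r) - Phi start steps r s u.2 u.2 + 1 ≤ ((NN:ℕ):ℤ) := by
    rw [hNN]
    push_cast
    linarith [Int.self_le_toNat (s*(u.1 + b*r) - Phi start steps r s u.2 u.2)]
  have hNs : ((NN:ℕ):ℤ) ≤ ((NN:ℕ):ℤ)*s :=
    le_mul_of_one_le_right (Int.natCast_nonneg NN) (by linarith)
  linarith
end

section
/- (Staircase Lemma) If P is a valid lattice path from (0,0) to (nr, ns), then P is northwest of the staircase path S = (E^r N^s)^n, i.e., for every vertex (x,y) of P there is a vertex (x',y') of S with x ≤ x' and y ≥ y'. -/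
/-- The staircase path `S = (E^r N^s)^n`. -/
def staircase (r s n : ℕ) : List Bool :=
  (List.replicate n (List.replicate r true ++ List.replicate s false)).flatten

namespace Staircase

lemma sum_map_stepVec (l : List Bool) :
    (l.map stepVec).sum = ((l.count true : ℤ), (l.count false : ℤ)) := by
  induction l with
  | nil => rfl
  | cons a t ih => cases a <;> simp [stepVec, ih, Prod.ext_iff] <;> ring

def prefixCount (l : List Bool) (b : Bool) (i : ℕ) : ℕ := (l.take i).count b

variable {l : List Bool} {b : Bool}

lemma pathPoint_origin (l : List Bool) (i : ℕ) :
    pathPoint (0, 0) l i = ((prefixCount l true i : ℤ), (prefixCount l false i : ℤ)) := by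
  rw [pathPoint, sum_map_stepVec]
  exact zero_add _

@[simp] lemma prefixCount_zero : prefixCount l b 0 = 0 := by simp [prefixCount]

lemma prefixCount_mono : Monotone (prefixCount l b) := fun i j hij => by
  simpa [prefixCount, List.take_take, min_eq_left hij] using
    ((l.take j).take_sublist i).count_le b

lemma prefixCount_le_count (i : ℕ) : prefixCount l b i ≤ l.count b :=
  (l.take_sublist i).count_le b

lemma prefixCount_of_length_le {i : ℕ} (hi : l.length ≤ i) : prefixCount l b i = l.count b := by
  rw [prefixCount, List.take_of_length_le hi]

lemma prefixCount_succ {i : ℕ} (hi : i < l.length) :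
    prefixCount l b (i + 1) = prefixCount l b i + if l[i] = b then 1 else 0 := by
  rw [prefixCount, prefixCount, List.take_add_one, List.getElem?_eq_getElem hi, List.count_append]
  simp [List.count_singleton]

lemma exists_step_prefixCount_eq {i₀ i₁ w : ℕ} (h₀ : prefixCount l b i₀ < w)
    (h₁ : w ≤ prefixCount l b i₁) :
    ∃ e, i₀ ≤ e ∧ e < i₁ ∧
      ∃ he : e < l.length, l[e] = b ∧ prefixCount l b (e + 1) = w := by
  induction i₁ with
  | zero => rw [prefixCount_zero] at h₁; omega
  | succ i ih =>
    by_cases hw : w ≤ prefixCount l b i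
    · obtain ⟨e, h₀e, hei, hrest⟩ := ih hw
      exact ⟨e, h₀e, by omega, hrest⟩
    have hi₀ : i₀ ≤ i := by
      by_contra! h
      have := prefixCount_mono (l := l) (b := b) (show i + 1 ≤ i₀ by omega)
      omega
    have hil : i < l.length := by
      by_contra! h
      rw [prefixCount_of_length_le h] at hw
      rw [prefixCount_of_length_le (h.trans (Nat.le_succ i))] at h₁
      omega
    have hsucc := prefixCount_succ (b := b) hil
    refine ⟨i, hi₀, by omega, hil, ?_, by split at hsucc <;> omega⟩
    by_contra hne
    rw [if_neg hne] at hsucc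
    omega

/-- The index at which the path first reaches height `j`; junk (`sInf ∅ = 0`) when `j` exceeds
the final height. -/
noncomputable def entryIndex (l : List Bool) (j : ℕ) : ℕ :=
  sInf {i | j ≤ prefixCount l false i}

noncomputable def entryX (l : List Bool) (j : ℕ) : ℕ := prefixCount l true (entryIndex l j)

variable {j j' : ℕ}

lemma entryIndex_le_iff (hj : j ≤ l.count false) {i : ℕ} :
    entryIndex l j ≤ i ↔ j ≤ prefixCount l false i := by
  refine ⟨fun h => le_trans ?_ (prefixCount_mono h), fun h => Nat.sInf_le h⟩
  exact Nat.sInf_mem (s := {i | j ≤ prefixCount l false i})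
    ⟨l.length, hj.trans (prefixCount_of_length_le le_rfl).ge⟩

lemma lt_entryIndex_iff (hj : j ≤ l.count false) {i : ℕ} :
    i < entryIndex l j ↔ prefixCount l false i < j := by
  simpa using (entryIndex_le_iff hj (i := i)).not

lemma entryIndex_mono (hjj' : j ≤ j') (hj' : j' ≤ l.count false) :
    entryIndex l j ≤ entryIndex l j' :=
  (entryIndex_le_iff (hjj'.trans hj')).2 <|
    hjj'.trans ((entryIndex_le_iff hj').1 le_rfl)

lemma exists_entryIndex_eq_succ (hj₀ : 0 < j) (hj : j ≤ l.count false) :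
    ∃ e, entryIndex l j = e + 1 ∧ ∃ he : e < l.length, l[e] = false ∧
      prefixCount l false (e + 1) = j := by
  obtain ⟨e, -, he, hel, hstep, hcount⟩ :=
    exists_step_prefixCount_eq (i₀ := 0) (i₁ := entryIndex l j) (by simpa using hj₀)
      ((entryIndex_le_iff hj).1 le_rfl)
  refine ⟨e, le_antisymm ((entryIndex_le_iff hj).2 hcount.ge) he, hel, hstep, hcount⟩

lemma entryX_zero : entryX l 0 = 0 := by
  simp [entryX, Nat.le_zero.1 ((entryIndex_le_iff (l := l) (Nat.zero_le _)).2 (Nat.zero_le _))]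

lemma entryX_le_count (j : ℕ) : entryX l j ≤ l.count true := prefixCount_le_count _

lemma entryX_mono (hjj' : j ≤ j') (hj' : j' ≤ l.count false) : entryX l j ≤ entryX l j' :=
  prefixCount_mono (entryIndex_mono hjj' hj')

lemma prefixCount_true_le_entryX {i : ℕ} (hi : prefixCount l false i < j)
    (hj : j ≤ l.count false) : prefixCount l true i ≤ entryX l j :=
  prefixCount_mono ((lt_entryIndex_iff hj).2 hi).le

section Valid

variable {r s : ℕ}

lemma entryX_succ_add_lt (hvalid : Valid r s (0, 0) l) (hj : j + s ≤ l.count false)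
    (h : entryX l j + r < entryX l (j + s)) : entryX l (j + 1) + r < entryX l (j + s) := by
  by_contra! hle
  have hs : 0 < s := by
    by_contra! hs
    simp only [Nat.le_zero.1 hs, add_zero] at h
    omega
  obtain ⟨b, hb, hbl, hNorth, hbCount⟩ := exists_entryIndex_eq_succ (by omega) hj
  obtain ⟨e, hje, hej, hel, hEast, heCount⟩ :=
    exists_step_prefixCount_eq (l := l) (b := true) (i₀ := entryIndex l j)
      (i₁ := entryIndex l (j + 1)) (w := entryX l (j + s) - r)
      (show entryX l j < _ by omega) (show _ ≤ entryX l (j + 1) by omega)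
  have heNorth : prefixCount l false (e + 1) = j := by
    have hlo := (entryIndex_le_iff (l := l) (by omega)).1 hje
    have hhi := (lt_entryIndex_iff (l := l) (j := j + 1) (by omega)).1 hej
    have hflat : prefixCount l false (e + 1) = prefixCount l false e := by
      simp [prefixCount_succ hel, hEast]
    omega
  have heb : e < b := by
    have := entryIndex_mono (l := l) (show j + 1 ≤ j + s by omega) hj
    have : e ≠ b := by rintro rfl; rw [hEast] at hNorth; exact Bool.noConfusion hNorth
    omega
  have hdiff : pathPoint (0, 0) l (b + 1) - pathPoint (0, 0) l (e + 1) =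
      ((1 : ℤ) * r, (1 : ℤ) * s) := by
    have hbEast : prefixCount l true (b + 1) = entryX l (j + s) := by rw [entryX, hb]
    rw [pathPoint_origin, pathPoint_origin, hbEast, heCount, hbCount, heNorth]
    ext <;> simp only [Nat.cast_add, Prod.mk_sub_mk, add_sub_cancel_left, one_mul]
    omega
  simpa [hNorth] using hvalid e b heb hel hbl ⟨1, hdiff⟩ hEast

lemma entryX_add_lt (hvalid : Valid r s (0, 0) l) (h : entryX l j + r < entryX l (j + s))
    {t : ℕ} (ht : j + t + s ≤ l.count false) : entryX l (j + t) + r < entryX l (j + t + s) := by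
  induction t with
  | zero => simpa using h
  | succ t ih =>
    have hgap := entryX_succ_add_lt hvalid (by omega) (ih (by omega))
    have hmono := entryX_mono (l := l) (show j + t + s ≤ j + t + 1 + s by omega) ht
    rw [← add_assoc]
    omega

lemma entryX_add_mul_le (hvalid : Valid r s (0, 0) l)
    (h : entryX l j + r < entryX l (j + s)) {m : ℕ} (hm : j + s + m * s ≤ l.count false) :
    entryX l (j + s) + m * r ≤ entryX l (j + s + m * s) := by
  induction m with
  | zero => simp
  | succ m ih =>
    simp only [Nat.succ_mul, ← add_assoc] at hm ⊢
    have hstep := entryX_add_lt hvalid h (t := s + m * s) (by omega)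
    rw [← add_assoc] at hstep
    have := ih (by omega)
    omega

lemma entryX_mul_le {n : ℕ} (hvalid : Valid r s (0, 0) l) (hE : l.count true = n * r)
    (hN : l.count false = n * s) {K : ℕ} (hK : K ≤ n) : entryX l (K * s) ≤ K * r := by
  induction K with
  | zero => simp [entryX_zero]
  | succ K ih =>
    obtain ⟨m, rfl⟩ : ∃ m, n = K + 1 + m := ⟨n - (K + 1), by omega⟩
    have hend : K * s + s + m * s = (K + 1 + m) * s := by ring
    rw [Nat.succ_mul, Nat.succ_mul]
    by_cases h : entryX l (K * s) + r < entryX l (K * s + s)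
    · have hchain := entryX_add_mul_le hvalid h (m := m) (by rw [hend, hN])
      have htop := entryX_le_count (l := l) ((K + 1 + m) * s)
      rw [← hend, hE] at htop
      nlinarith
    · have := ih (by omega)
      omega

lemma prefixCount_true_le {n K : ℕ} (hvalid : Valid r s (0, 0) l) (hE : l.count true = n * r)
    (hN : l.count false = n * s) (hK : K < n) {i : ℕ} (hi : prefixCount l false i < (K + 1) * s) :
    prefixCount l true i ≤ (K + 1) * r :=
  calc prefixCount l true i ≤ entryX l ((K + 1) * s) :=
        prefixCount_true_le_entryX hi (hN ▸ Nat.mul_le_mul_right s hK)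
    _ ≤ (K + 1) * r := entryX_mul_le hvalid hE hN hK

end Valid

lemma pathPoint_origin_length (l : List Bool) :
    pathPoint (0, 0) l l.length = ((l.count true : ℤ), (l.count false : ℤ)) := by
  rw [pathPoint_origin, prefixCount_of_length_le le_rfl, prefixCount_of_length_le le_rfl]

lemma pathPoint_append_length (start : ℤ × ℤ) (p q : List Bool) :
    pathPoint start (p ++ q) p.length = pathPoint start p p.length := by
  rw [pathPoint, pathPoint, List.take_left, List.take_length]

lemma count_true_staircase (r s n : ℕ) : (staircase r s n).count true = n * r := by
  simp [staircase, List.count_flatten, List.count_replicate]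

lemma count_false_staircase (r s n : ℕ) : (staircase r s n).count false = n * s := by
  simp [staircase, List.count_flatten, List.count_replicate]

lemma staircase_eq_append (r s : ℕ) {n K : ℕ} (hK : K < n) :
    ∃ rest, staircase r s n = (staircase r s K ++ List.replicate r true) ++ rest := by
  obtain ⟨m, rfl⟩ : ∃ m, n = K + 1 + m := ⟨n - (K + 1), by omega⟩
  exact ⟨List.replicate s false ++ staircase r s m, by
    simp [staircase, List.replicate_add, List.flatten_append]⟩

lemma exists_pathPoint_staircase_eq (r s : ℕ) {n K : ℕ} (hK : K < n) :
    ∃ m ≤ (staircase r s n).length,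
      pathPoint (0, 0) (staircase r s n) m =
        ((((K + 1) * r : ℕ) : ℤ), ((K * s : ℕ) : ℤ)) := by
  obtain ⟨rest, hrest⟩ := staircase_eq_append r s hK
  refine ⟨(staircase r s K ++ List.replicate r true).length, by simp [hrest], ?_⟩
  rw [hrest, pathPoint_append_length, pathPoint_origin_length]
  simp [count_true_staircase, count_false_staircase, List.count_replicate]
  ring

end Staircase

open Staircase in
theorem staircase_lemma_general (r s n : ℕ)
    (steps : List Bool)
    (hpath : IsPathFrom (0, 0) ((n * r : ℤ), (n * s : ℤ)) steps)
    (hvalid : Valid r s (0, 0) steps) :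
    ∀ m ≤ steps.length, ∃ m' ≤ (staircase r s n).length,
      (pathPoint (0, 0) steps m).1 ≤ (pathPoint (0, 0) (staircase r s n) m').1 ∧
      (pathPoint (0, 0) (staircase r s n) m').2 ≤ (pathPoint (0, 0) steps m).2 := by
  obtain ⟨hE, hN⟩ : steps.count true = n * r ∧ steps.count false = n * s := by
    have h := hpath
    rw [IsPathFrom, pathPoint_origin_length, Prod.mk.injEq] at h
    exact_mod_cast h
  intro m _
  rw [pathPoint_origin]
  rcases (hN ▸ prefixCount_le_count (l := steps) (b := false) m).lt_or_eq with hlt | heq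
  · set y := prefixCount steps false m
    have hs : 0 < s := Nat.pos_of_ne_zero (by rintro rfl; simp at hlt)
    have hK : y / s < n := Nat.div_lt_of_lt_mul (by rwa [mul_comm])
    obtain ⟨m', hm', hpt⟩ := exists_pathPoint_staircase_eq r s hK
    refine ⟨m', hm', ?_⟩
    rw [hpt]
    have hx := prefixCount_true_le hvalid hE hN hK (i := m)
      (by rw [add_mul, one_mul]; exact Nat.lt_div_mul_add hs)
    exact ⟨Nat.cast_le.2 hx, Nat.cast_le.2 (Nat.div_mul_le_self y s)⟩
  · refine ⟨_, le_rfl, ?_⟩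
    rw [pathPoint_origin_length, count_true_staircase, count_false_staircase, heq]
    have hx := hE ▸ prefixCount_le_count (l := steps) (b := true) m
    exact ⟨Nat.cast_le.2 hx, le_rfl⟩

/-- Staircase Lemma: a valid path from `(0,0)` to `(nr,ns)` is northwest of
the staircase: every vertex of `P` has some vertex of `S` weakly southeast of it. -/
theorem staircase_lemma (r s n : ℕ) (hr : 0 < r) (hs : 0 < s) (hn : 0 < n)
    (steps : List Bool)
    (hpath : IsPathFrom (0, 0) ((n * r : ℤ), (n * s : ℤ)) steps)
    (hvalid : Valid r s (0, 0) steps) :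
    ∀ m ≤ steps.length, ∃ m' ≤ (staircase r s n).length,
      (pathPoint (0, 0) steps m).1 ≤ (pathPoint (0, 0) (staircase r s n) m').1 ∧
      (pathPoint (0, 0) (staircase r s n) m').2 ≤ (pathPoint (0, 0) steps m).2 :=
  staircase_lemma_general r s n steps hpath hvalid
end

section
/- Let s = 2 and let P be a valid path from (0,0) to (nr, 2n) with n ≥ 2. Write the prefix of P up to and including its second N-step as E^a N E^b N. Then a + b ≤ r. -/
/-!
Let `c₀ = a, c₁ = b, …, c₂ₙ₋₁` be the lengths of the `E`-runs preceding the `2n` `N`-steps.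
Validity with `ℓ = 1` forbids an `E`-step entering `(x, k)` followed by the `N`-step entering
`(x + r, k + 2)`; hence `r < cₖ + cₖ₊₁` forces `r < cₖ₊₁`. Starting from `r < a + b`, each of the
`2n - 1` runs `c₁, …, c₂ₙ₋₁` has length at least `r + 1`, which is more than the `nr` available
`E`-steps.
-/

lemma sum_map_stepVec (l : List Bool) :
    (l.map stepVec).sum = ((l.count true : ℤ), (l.count false : ℤ)) := by
  induction l with
  | nil => rfl
  | cons b t ih => cases b <;> simp [stepVec, ih, add_comm]

lemma IsPathFrom.count_eq {l : List Bool} {x y : ℤ} (h : IsPathFrom (0, 0) (x, y) l) :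
    (l.count true : ℤ) = x ∧ (l.count false : ℤ) = y := by
  rwa [IsPathFrom, pathPoint, List.take_length, sum_map_stepVec, Prod.mk_add_mk, zero_add, zero_add,
    Prod.mk.injEq] at h

lemma pathPoint_append_sub (start : ℤ × ℤ) (A B C : List Bool) :
    pathPoint start (A ++ B ++ C) (A.length + B.length) - pathPoint start (A ++ B ++ C) A.length =
      (B.map stepVec).sum := by
  have hAB : (A ++ B ++ C).take (A.length + B.length) = A ++ B := by
    rw [← List.length_append, List.take_left]
  have hA : (A ++ B ++ C).take A.length = A := by simp
  simp only [pathPoint, hAB, hA, List.map_append, List.sum_append]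
  abel

lemma exists_eq_replicate_true_append {l : List Bool} (h : false ∈ l) :
    ∃ c t, l = List.replicate c true ++ false :: t := by
  induction l with
  | nil => simp at h
  | cons b l ih =>
    cases b
    · exact ⟨0, l, rfl⟩
    · obtain ⟨c, t, rfl⟩ := ih (by simpa using h)
      exact ⟨c + 1, t, rfl⟩

theorem Valid.sum_ne_of_east_north {r s : ℤ} {start : ℤ × ℤ} {A B C : List Bool}
    (hv : Valid r s start (A ++ true :: (B ++ false :: C))) (ℓ : ℤ) :
    ((B ++ [false]).map stepVec).sum ≠ (ℓ * r, ℓ * s) := by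
  intro hsum
  have hl : A ++ true :: (B ++ false :: C) = (A ++ [true]) ++ (B ++ [false]) ++ C := by simp
  have hjlen : A.length + 1 + B.length = (A ++ true :: B).length := by
    simp only [List.length_append, List.length_cons]
    omega
  have hj := hv A.length (A.length + 1 + B.length) (by omega) (by simp) (by simp [hjlen]) ⟨ℓ, by
    rw [← hsum, hl, ← pathPoint_append_sub start (A ++ [true]) (B ++ [false]) C]
    simp only [List.length_append, List.length_singleton]
    congr 2⟩ (by simp)
  simp [hjlen, List.getElem_append_right] at hj

theorem Valid.lt_of_lt_add {r : ℕ} {start : ℤ × ℤ} {pre post : List Bool} {p q : ℕ}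
    (hv : Valid r 2 start
      (pre ++ List.replicate p true ++ [false] ++ List.replicate q true ++ [false] ++ post))
    (hpq : r < p + q) : r < q := by
  by_contra! hqr
  obtain ⟨u, rfl⟩ : ∃ u, p = u + 1 + (r - q) := ⟨p - 1 - (r - q), by omega⟩
  have hl : pre ++ List.replicate (u + 1 + (r - q)) true ++ [false] ++ List.replicate q true ++
      [false] ++ post = (pre ++ List.replicate u true) ++
      true :: ((List.replicate (r - q) true ++ false :: List.replicate q true) ++ false :: post) := by
    simp [List.replicate_add]
  rw [hl] at hv
  refine hv.sum_ne_of_east_north 1 ?_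
  rw [sum_map_stepVec]
  simp [List.count_replicate, hqr]

theorem Valid.count_true_ge {r : ℕ} {start : ℤ × ℤ} {pre rest : List Bool} {p q : ℕ}
    (hv : Valid r 2 start
      (pre ++ List.replicate p true ++ [false] ++ List.replicate q true ++ [false] ++ rest))
    (hpq : r < p + q) : (r + 1) * (rest.count false + 1) ≤ q + rest.count true := by
  have hq := hv.lt_of_lt_add hpq
  obtain ⟨k, hk⟩ : ∃ k, rest.count false = k := ⟨_, rfl⟩
  induction k generalizing pre p q rest with
  | zero =>
    rw [hk]
    omega
  | succ k ih =>
    obtain ⟨c, t, rfl⟩ := exists_eq_replicate_true_append (List.count_pos_iff.mp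
      (by omega : 0 < rest.count false))
    have hv' : Valid r 2 start ((pre ++ List.replicate p true ++ [false]) ++
        List.replicate q true ++ [false] ++ List.replicate c true ++ [false] ++ t) := by
      simpa using hv
    have hfalse : (List.replicate c true ++ false :: t).count false = t.count false + 1 := by
      simp [List.count_replicate]
    have htrue : (List.replicate c true ++ false :: t).count true = c + t.count true := by simp
    have ht := ih hv' (by omega) (hv'.lt_of_lt_add (by omega)) (by omega)
    rw [hfalse, htrue]
    nlinarith

theorem prefix_bound_general (r n : ℕ)
    (a b : ℕ) (rest : List Bool)
    (steps : List Bool)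
    (hform : steps = List.replicate a true ++ [false] ++ List.replicate b true ++ [false] ++ rest)
    (hpath : IsPathFrom (0, 0) ((n * r : ℤ), (2 * n : ℤ)) steps)
    (hvalid : Valid r 2 (0, 0) steps) :
    a + b ≤ r := by
  by_contra! hab
  rw [hform, ← List.nil_append (List.replicate a true)] at hvalid
  have heast := hvalid.count_true_ge hab
  obtain ⟨htotal_east, htotal_north⟩ := hpath.count_eq
  have heast_total : (a + b + rest.count true : ℤ) = n * r := by
    simpa [hform, add_assoc] using htotal_east
  have hnorth_total : (rest.count false + 2 : ℤ) = 2 * n := by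
    simpa [hform, List.count_replicate, add_assoc] using htotal_north
  nlinarith

/-- for `s = 2`, a valid path from `(0,0)` to `(nr,2n)` with prefix
`E^a N E^b N` up to its second `N`-step satisfies `a + b ≤ r`. -/
theorem prefix_bound (r n : ℕ) (hr : 0 < r) (hn : 2 ≤ n)
    (a b : ℕ) (rest : List Bool)
    (steps : List Bool)
    (hform : steps = List.replicate a true ++ [false] ++ List.replicate b true ++ [false] ++ rest)
    (hpath : IsPathFrom (0, 0) ((n * r : ℤ), (2 * n : ℤ)) steps)
    (hvalid : Valid r 2 (0, 0) steps) :
    a + b ≤ r :=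
  prefix_bound_general r n a b rest steps hform hpath hvalid
end

section
/- Let s = 2, n ≥ 2, and let P = E^a N E^b N Q N E^c be a valid path from (0,0) to (nr, 2n), where a + b + c < r, E^a N E^b N is the prefix up to the second N-step, and N E^c is the final N-step followed by the terminal run of E-steps. Then Q ends with at least r+1 east steps. -/
/-!
Write the path as `E^{g₀} N E^{g₁} N ⋯ E^{g₂ₙ₋₁} N E^c` and put `uᵢ = g₀ + ⋯ + gᵢ₋₁`
(`(gs.take i).sum` below), so that the `i`-th north step enters `(uᵢ, i)`. Validity forbids an
east step entering `(p, h)`, with `u_h < p ≤ u_{h+1}`, followed by the north step entering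
`(p + ℓr, h + 2ℓ)`.

Suppose the last gap `g₂ₙ₋₁`, the final east run of `Q`, is at most `r`. Starting from
`u₂ + c = a + b + c < r` one shows alternately `u_{2j+1} + c < jr` and `u_{2j+2} + c < (j+1)r`.
A failure of the first would put the east step entering `(jr - c, 2j)` in the class of the last
north step, which enters `(nr - c, 2n)`. A failure of the second would put the east step entering
`(u_{2n-1} - (n-1-j)r, 2j+1)` in the class of the north step entering `(u_{2n-1}, 2n-1)`; the
bound on the last gap is what makes `u_{2n-1} - (n-1-j)r` land in row `2j+1`. At `j = n - 1`
the first inequality contradicts `u_{2n-1} ≥ nr - c - r`.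
-/

def ofGaps : List ℕ → List Bool
  | [] => []
  | g :: gs => List.replicate g true ++ false :: ofGaps gs

@[simp] lemma ofGaps_nil : ofGaps [] = [] := rfl

@[simp] lemma ofGaps_cons (g : ℕ) (gs : List ℕ) :
    ofGaps (g :: gs) = List.replicate g true ++ false :: ofGaps gs := rfl

lemma ofGaps_append (gs hs : List ℕ) : ofGaps (gs ++ hs) = ofGaps gs ++ ofGaps hs := by
  induction gs with
  | nil => rfl
  | cons g gs ih => simp [ih]

lemma exists_eq_ofGaps_append_replicate (L : List Bool) :
    ∃ gs t, L = ofGaps gs ++ List.replicate t true := by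
  induction L with
  | nil => exact ⟨[], 0, rfl⟩
  | cons b L ih =>
    obtain ⟨gs, t, rfl⟩ := ih
    cases b with
    | false => exact ⟨0 :: gs, t, by simp⟩
    | true =>
      cases gs with
      | nil => exact ⟨[], t + 1, by simp [List.replicate_succ]⟩
      | cons g gs => exact ⟨(g + 1) :: gs, t, by simp [List.replicate_succ]⟩

@[simp] lemma length_ofGaps (gs : List ℕ) : (ofGaps gs).length = gs.sum + gs.length := by
  induction gs with
  | nil => rfl
  | cons g gs ih =>
    simp only [ofGaps_cons, List.length_append, List.length_replicate, List.length_cons, ih,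
      List.sum_cons]
    omega

lemma ofGaps_eq_of_lt {gs : List ℕ} {k : ℕ} (hk : k < gs.length) :
    ofGaps gs =
      ofGaps (gs.take k) ++ List.replicate gs[k] true ++ false :: ofGaps (gs.drop (k + 1)) := by
  rw [List.append_assoc, ← ofGaps_cons, ← ofGaps_append, ← List.drop_eq_getElem_cons hk,
    List.take_append_drop]

lemma ofGaps_take_add_one {gs : List ℕ} {k : ℕ} (hk : k < gs.length) :
    ofGaps (gs.take (k + 1)) = ofGaps (gs.take k) ++ List.replicate gs[k] true ++ [false] := by
  rw [← List.take_append_getElem hk, ofGaps_append]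
  simp

@[simp] lemma stepVec_true : stepVec true = (1, 0) := rfl

@[simp] lemma stepVec_false : stepVec false = (0, 1) := rfl

@[simp] lemma sum_map_stepVec_replicate_true (d : ℕ) :
    ((List.replicate d true).map stepVec).sum = ((d : ℤ), 0) := by
  simp

@[simp] lemma sum_map_stepVec_ofGaps (gs : List ℕ) :
    ((ofGaps gs).map stepVec).sum = ((gs.sum : ℤ), (gs.length : ℤ)) := by
  induction gs with
  | nil => rfl
  | cons g gs ih =>
    simp only [ofGaps_cons, List.map_append, List.map_cons, List.sum_append, List.sum_cons,
      sum_map_stepVec_replicate_true, stepVec_false, ih, List.length_cons, Prod.mk_add_mk,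
      Prod.mk.injEq]
    push_cast
    constructor <;> ring

lemma isPathFrom_iff {start fin : ℤ × ℤ} {L : List Bool} :
    IsPathFrom start fin L ↔ start + (L.map stepVec).sum = fin := by
  simp [IsPathFrom, pathPoint]

lemma pathPoint_append_cons (start : ℤ × ℤ) (X Y : List Bool) (b : Bool) :
    pathPoint start (X ++ b :: Y) (X.length + 1) = start + ((X ++ [b]).map stepVec).sum := by
  rw [pathPoint, ← List.singleton_append, ← List.append_assoc, List.take_left' (by simp)]

lemma Valid.not_east_north {r s : ℤ} {start : ℤ × ℤ} {L X Y X' Y' : List Bool}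
    (hv : Valid r s start L) (hX : L = X ++ true :: Y) (hX' : L = X' ++ false :: Y')
    (hlt : X.length < X'.length) (ℓ : ℤ)
    (hℓ : ((X' ++ [false]).map stepVec).sum - ((X ++ [true]).map stepVec).sum =
      (ℓ * r, ℓ * s)) :
    False := by
  have hi : X.length < L.length := by simp [hX]
  have hj : X'.length < L.length := by simp [hX']
  have hclass : ∃ ℓ : ℤ, pathPoint start L (X'.length + 1) - pathPoint start L (X.length + 1)
      = (ℓ * r, ℓ * s) := by
    refine ⟨ℓ, ?_⟩
    rw [hX', pathPoint_append_cons, ← hX', hX, pathPoint_append_cons, ← hℓ]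
    abel
  have := hv _ _ hlt hi hj hclass (by simp [hX])
  simp [hX'] at this

lemma Valid.not_east_north_ofGaps {r s : ℤ} {gs : List ℕ} {tail : List Bool}
    (hv : Valid r s (0, 0) (ofGaps gs ++ tail)) {h k : ℕ} (hhk : h ≤ k) (hk : k < gs.length)
    {p ℓ : ℤ} (hp : ((gs.take h).sum : ℤ) < p) (hp' : p ≤ (gs.take (h + 1)).sum)
    (hx : p + ℓ * r = (gs.take (k + 1)).sum) (hy : h + ℓ * s = k + 1) : False := by
  have hh : h < gs.length := by omega
  have hsucc_h := List.sum_take_succ gs h hh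
  have hsucc_k := List.sum_take_succ gs k hk
  have hmono : (gs.take (h + 1)).sum ≤ (gs.take (k + 1)).sum :=
    List.monotone_sum_take gs (by omega)
  obtain ⟨d, rfl⟩ : ∃ d : ℕ, p = (gs.take h).sum + d + 1 :=
    ⟨(p - (gs.take h).sum - 1).toNat, by omega⟩
  have hd : d < gs[h] := by omega
  have hsplit : List.replicate gs[h] true
      = List.replicate d true ++ true :: List.replicate (gs[h] - d - 1) true := by
    rw [← List.replicate_succ, ← List.replicate_add]; congr 1; omega
  refine hv.not_east_north (X := ofGaps (gs.take h) ++ List.replicate d true)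
    (Y := List.replicate (gs[h] - d - 1) true ++ false :: ofGaps (gs.drop (h + 1)) ++ tail)
    (X' := ofGaps (gs.take k) ++ List.replicate gs[k] true)
    (Y' := ofGaps (gs.drop (k + 1)) ++ tail) ?_ ?_ ?_ ℓ ?_
  · rw [ofGaps_eq_of_lt hh, hsplit]; simp
  · rw [ofGaps_eq_of_lt hk]; simp
  · simp only [List.length_append, length_ofGaps, List.length_replicate, List.length_take]
    omega
  · rw [← ofGaps_take_add_one hk]
    simp only [List.map_append, List.sum_append, sum_map_stepVec_ofGaps,
      sum_map_stepVec_replicate_true, List.length_take, List.map_cons, List.map_nil,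
      List.sum_cons, List.sum_nil, stepVec_true, Prod.ext_iff, Prod.fst_sub, Prod.snd_sub,
      Prod.fst_add, Prod.snd_add, add_zero]
    omega

section LastGap

variable {r c : ℤ} {n : ℕ} {gs : List ℕ} {tail : List Bool}

lemma Valid.sum_take_two_mul_add_one_lt_of_sum_take_two_mul_lt
    (hv : Valid r 2 (0, 0) (ofGaps gs ++ tail))
    (hlen : gs.length = 2 * n) (hsum : (gs.sum : ℤ) + c = n * r) {j : ℕ} (hj : j < n)
    (h : ((gs.take (2 * j)).sum : ℤ) + c < j * r) :
    ((gs.take (2 * j + 1)).sum : ℤ) + c < j * r := by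
  by_contra! hge
  have hk : 2 * n - 1 + 1 = gs.length := by omega
  exact hv.not_east_north_ofGaps (h := 2 * j) (k := 2 * n - 1) (p := j * r - c) (ℓ := n - j)
    (by omega) (by omega) (by linarith) (by linarith)
    (by rw [hk, List.take_length]; linear_combination -hsum) (by omega)

lemma Valid.sum_take_two_mul_add_two_lt_of_sum_take_two_mul_add_one_lt
    (hv : Valid r 2 (0, 0) (ofGaps gs ++ tail))
    (hlen : gs.length = 2 * n) (hsum : (gs.sum : ℤ) + c = n * r)
    (hlast : (gs.sum : ℤ) ≤ (gs.take (2 * n - 1)).sum + r) {j : ℕ} (hj : j + 1 < n)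
    (h : ((gs.take (2 * j + 1)).sum : ℤ) + c < j * r) :
    ((gs.take (2 * j + 2)).sum : ℤ) + c < (j + 1) * r := by
  by_contra! hge
  have hle : ((gs.take (2 * n - 1)).sum : ℤ) ≤ gs.sum := by
    conv_rhs => rw [← List.take_length (l := gs)]
    exact_mod_cast List.monotone_sum_take gs (by omega)
  have hk : 2 * n - 2 + 1 = 2 * n - 1 := by omega
  exact hv.not_east_north_ofGaps (h := 2 * j + 1) (k := 2 * n - 2)
    (p := (gs.take (2 * n - 1)).sum - (n - 1 - j) * r) (ℓ := n - 1 - j)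
    (by omega) (by omega) (by linarith)
    (by rw [show 2 * j + 1 + 1 = 2 * j + 2 by ring]; linarith)
    (by rw [hk]; ring) (by omega)

lemma Valid.sum_take_two_mul_add_one_lt (hv : Valid r 2 (0, 0) (ofGaps gs ++ tail))
    (hlen : gs.length = 2 * n) (hsum : (gs.sum : ℤ) + c = n * r)
    (hlast : (gs.sum : ℤ) ≤ (gs.take (2 * n - 1)).sum + r)
    (h2 : ((gs.take 2).sum : ℤ) + c < r) {j : ℕ} (hj1 : 1 ≤ j) (hj : j < n) :
    ((gs.take (2 * j + 1)).sum : ℤ) + c < j * r := by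
  induction j, hj1 using Nat.le_induction with
  | base =>
    exact hv.sum_take_two_mul_add_one_lt_of_sum_take_two_mul_lt hlen hsum hj
      (by simpa only [mul_one, Nat.cast_one, one_mul] using h2)
  | succ j _ ih =>
    refine hv.sum_take_two_mul_add_one_lt_of_sum_take_two_mul_lt hlen hsum hj ?_
    rw [Nat.cast_succ, show 2 * (j + 1) = 2 * j + 2 by ring]
    exact hv.sum_take_two_mul_add_two_lt_of_sum_take_two_mul_add_one_lt hlen hsum hlast hj
      (ih (by omega))

lemma Valid.sum_take_two_mul_sub_one_add_lt_sum (hv : Valid r 2 (0, 0) (ofGaps gs ++ tail))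
    (hn : 2 ≤ n) (hlen : gs.length = 2 * n) (hsum : (gs.sum : ℤ) + c = n * r)
    (h2 : ((gs.take 2).sum : ℤ) + c < r) :
    ((gs.take (2 * n - 1)).sum : ℤ) + r < gs.sum := by
  by_contra! hlast
  have := hv.sum_take_two_mul_add_one_lt hlen hsum hlast h2 (j := n - 1) (by omega) (by omega)
  rw [show 2 * (n - 1) + 1 = 2 * n - 1 by omega, Nat.cast_sub (by omega), Nat.cast_one] at this
  linarith

end LastGap

theorem case_two_many_east_general (r n : ℕ) (hn : 2 ≤ n)
    (a b c : ℕ) (Q : List Bool) (steps : List Bool)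
    (hform : steps = List.replicate a true ++ [false] ++ List.replicate b true ++ [false] ++
      Q ++ [false] ++ List.replicate c true)
    (habc : a + b + c < r)
    (hpath : IsPathFrom (0, 0) ((n * r : ℤ), (2 * n : ℤ)) steps)
    (hvalid : Valid r 2 (0, 0) steps) :
    ∃ R : List Bool, Q = R ++ List.replicate (r + 1) true := by
  obtain ⟨gs, t, rfl⟩ := exists_eq_ofGaps_append_replicate Q
  have hsteps : steps = ofGaps ((a :: b :: gs) ++ [t]) ++ List.replicate c true := by
    simp [hform, ofGaps_append]
  rw [hsteps, isPathFrom_iff] at hpath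
  rw [hsteps] at hvalid
  simp only [List.map_append, List.sum_append, sum_map_stepVec_ofGaps,
    sum_map_stepVec_replicate_true, zero_add, Prod.mk_add_mk, Prod.mk.injEq] at hpath
  obtain ⟨hsum, hlen⟩ := hpath
  have hlast := hvalid.sum_take_two_mul_sub_one_add_lt_sum hn (by omega)
    (by rwa [List.sum_append]) (by simp; omega)
  rw [List.take_left' (by simp at hlen ⊢; omega)] at hlast
  refine ⟨ofGaps gs ++ List.replicate (t - (r + 1)) true, ?_⟩
  rw [List.append_assoc, ← List.replicate_add]
  congr 2
  simp only [List.sum_cons, Nat.cast_add, List.sum_append, List.sum_nil, add_zero] at hlast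
  omega

/-- case (2) of the bijection. If `P = E^a N E^b N Q N E^c` is a valid path from
`(0,0)` to `(nr,2n)` with `a + b + c < r`, then `Q` ends with at least `r+1` east steps. -/
theorem case_two_many_east (r n : ℕ) (hr : 0 < r) (hn : 2 ≤ n)
    (a b c : ℕ) (Q : List Bool) (steps : List Bool)
    (hform : steps = List.replicate a true ++ [false] ++ List.replicate b true ++ [false] ++
      Q ++ [false] ++ List.replicate c true)
    (habc : a + b + c < r)
    (hpath : IsPathFrom (0, 0) ((n * r : ℤ), (2 * n : ℤ)) steps)
    (hvalid : Valid r 2 (0, 0) steps) :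
    ∃ R : List Bool, Q = R ++ List.replicate (r + 1) true :=
  case_two_many_east_general r n hn a b c Q steps hform habc hpath hvalid
end

section
/- Let s = 2, n ≥ 2, and let P be a valid path from (0,0) to (nr,2n) of the form E^a N E^b N Q N E^c with a + b + c < r (prefix up to second N-step, suffix after last N-step). Then for every point v in the equivalence class [r-c, 2] = {(r-c,2) + ℓ(r,2) : ℓ ∈ ℤ} that lies on P after the second N-step, P enters v with an N-step; in particular every E-edge into a point of this class occurring after P's second N-step is blocked (cannot appear on P). -/
/-! The last `N`-step of `P` enters the corner `(nr - c, 2n)`, which lies in the class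
`[r - c, 2]`. Validity, read backwards from that step, forbids `E`-steps into earlier points of
the class, and the points of the final run `E^c` are the corner shifted by `(k, 0)` with
`1 ≤ k ≤ c`, which is not a multiple of `(r, s)` when `s ≠ 0`. -/

lemma pathPoint_append_replicate_true (start : ℤ × ℤ) (L : List Bool) {c k : ℕ} (hk : k ≤ c) :
    pathPoint start (L ++ List.replicate c true) (L.length + k) =
      pathPoint start (L ++ List.replicate c true) L.length + ((k : ℤ), 0) := by
  simp [pathPoint, List.take_append, add_assoc, List.take_replicate, min_eq_left hk,
    List.take_of_length_le, stepVec]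

lemma Valid.get_eq_false_of_later_north {r s : ℤ} {start : ℤ × ℤ} {steps : List Bool}
    (hvalid : Valid r s start steps) {i j : ℕ} (hij : i < j) (hi : i < steps.length)
    (hj : j < steps.length)
    (hclass : ∃ ℓ : ℤ,
      pathPoint start steps (j + 1) - pathPoint start steps (i + 1) = (ℓ * r, ℓ * s))
    (hnorth : steps.get ⟨j, hj⟩ = false) : steps.get ⟨i, hi⟩ = false :=
  Bool.eq_false_iff.mpr fun heast =>
    Bool.false_ne_true (hnorth ▸ hvalid i j hij hi hj hclass heast)

theorem Valid.getD_eq_false_of_mem_class_of_last_north {r s : ℤ} (hs : s ≠ 0)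
    {start : ℤ × ℤ} {steps L : List Bool} {c : ℕ}
    (hvalid : Valid r s start steps) (hsteps : steps = L ++ [false] ++ List.replicate c true)
    {m : ℕ} (hm0 : 0 < m) (hm : m ≤ steps.length)
    (hclass : ∃ ℓ : ℤ,
      pathPoint start steps (L.length + 1) - pathPoint start steps m = (ℓ * r, ℓ * s)) :
    steps.getD (m - 1) true = false := by
  have hlen : steps.length = L.length + 1 + c := by simp [hsteps]; omega
  have hnorth : ∀ h : L.length < steps.length, steps[L.length] = false := by
    intro h; subst hsteps; simp
  obtain ⟨i, rfl⟩ : ∃ i, m = i + 1 := ⟨m - 1, by omega⟩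
  rw [Nat.add_sub_cancel, List.getD_eq_getElem _ _ (by omega)]
  rcases lt_trichotomy i L.length with hlt | rfl | hgt
  · exact Valid.get_eq_false_of_later_north hvalid hlt (by omega) (by omega) hclass
      (hnorth (by omega))
  · exact hnorth (by omega)
  · obtain ⟨k, rfl⟩ := Nat.exists_eq_add_of_lt hgt
    have heast := pathPoint_append_replicate_true start (L ++ [false]) (c := c) (k := k + 1)
      (by omega)
    simp only [List.length_append, List.length_singleton, ← hsteps] at heast
    obtain ⟨ℓ, hℓ⟩ := hclass
    rw [show L.length + k + 1 + 1 = L.length + 1 + (k + 1) by omega, heast] at hℓ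
    simp only [sub_add_cancel_left, Prod.neg_mk, Prod.mk.injEq, neg_zero] at hℓ
    have hℓ0 : ℓ = 0 := by simpa [hs, eq_comm] using hℓ.2
    have hk := hℓ.1
    simp only [hℓ0, zero_mul] at hk
    omega

theorem class_entered_by_north_general (r n : ℕ)
    (a b c : ℕ) (Q : List Bool) (steps : List Bool)
    (hform : steps = List.replicate a true ++ [false] ++ List.replicate b true ++ [false] ++
      Q ++ [false] ++ List.replicate c true)
    (hpath : IsPathFrom (0, 0) ((n * r : ℤ), (2 * n : ℤ)) steps)
    (hvalid : Valid r 2 (0, 0) steps) :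
    ∀ m ≤ steps.length, a + b + 2 < m →
      (∃ ℓ : ℤ, pathPoint (0, 0) steps m = ((r : ℤ) - c + ℓ * r, 2 + ℓ * 2)) →
      steps.getD (m - 1) true = false := by
  rintro m hm hm2 ⟨ℓ, hℓ⟩
  set L := List.replicate a true ++ [false] ++ List.replicate b true ++ [false] ++ Q
  have hlast : pathPoint (0, 0) steps (L.length + 1) = ((n * r : ℤ) - c, (2 * n : ℤ)) := by
    have heast := pathPoint_append_replicate_true (0, 0) (L ++ [false]) (le_refl c)
    simp only [List.length_append, List.length_singleton] at heast
    rw [← hform, show L.length + 1 + c = steps.length by simp [hform]; omega,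
      hpath] at heast
    rw [eq_comm, ← eq_sub_iff_add_eq] at heast
    rw [heast]; ext <;> simp
  refine hvalid.getD_eq_false_of_mem_class_of_last_north two_ne_zero hform (by omega) hm
    ⟨n - 1 - ℓ, ?_⟩
  rw [hlast, hℓ]; ext <;> simp <;> ring

/-- if `P = E^a N E^b N Q N E^c` is a valid path from `(0,0)` to `(nr,2n)` with
`a + b + c < r`, then every point of `P` lying after the second `N`-step in the class
`[r-c, 2] = {(r-c,2) + ℓ(r,2) : ℓ ∈ ℤ}` is entered by `P` with an `N`-step; in particular
all `E`-edges into points of this class after the second `N`-step are blocked for `P`. -/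
theorem class_entered_by_north (r n : ℕ) (hr : 0 < r) (hn : 2 ≤ n)
    (a b c : ℕ) (Q : List Bool) (steps : List Bool)
    (hform : steps = List.replicate a true ++ [false] ++ List.replicate b true ++ [false] ++
      Q ++ [false] ++ List.replicate c true)
    (habc : a + b + c < r)
    (hpath : IsPathFrom (0, 0) ((n * r : ℤ), (2 * n : ℤ)) steps)
    (hvalid : Valid r 2 (0, 0) steps) :
    ∀ m ≤ steps.length, a + b + 2 < m →
      (∃ ℓ : ℤ, pathPoint (0, 0) steps m = ((r : ℤ) - c + ℓ * r, 2 + ℓ * 2)) →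
      steps.getD (m - 1) true = false :=
  class_entered_by_north_general r n a b c Q steps hform hpath hvalid
end
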